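/- Let W ≥ 1 and let l : List Bool be a list of mark flags. If no complete aligned block of l is fully marked, then l.count false ≥ l.length / W (natural-number division); that is, the number of live (unmarked) entries is at least a 1/W fraction of the list length. -/
import Mathlib

lemma stack_aux (W : ℕ) (hW : 1 ≤ W) : ∀ n (l : List Bool), l.length ≤ n →
    (∀ k, (k + 1) * W ≤ l.length →
      ¬ (∀ b ∈ (l.drop (k * W)).take W, b = true)) →
    l.length / W ≤ l.count false := by
  intro n
  induction n with
  | zero =>
    intro l hl _
    interval_cases h : l.length
    simp [h, Nat.zero_div]
  | succ n ih =>
    intro l hl hno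
    by_cases hlen : W ≤ l.length
    · -- first block has a false
      have h0 := hno 0 (by simpa using hlen)
      simp only [Nat.zero_mul, List.drop_zero] at h0
      push_neg at h0
      obtain ⟨b, hb, hbne⟩ := h0
      have hbf : b = false := by cases b <;> simp_all
      -- count in take W l is ≥ 1
      have h1 : 1 ≤ (l.take W).count false := by
        have : false ∈ l.take W := hbf ▸ hb
        simpa [List.count_pos_iff] using List.count_pos_iff.mpr this
      -- induction on the tail
      have htail : (l.drop W).length / W ≤ (l.drop W).count false := by
        apply ih
        · simp only [List.length_drop]
          omega
        · intro k hk
          simp only [List.length_drop] at hk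
          have hle : (k + 1 + 1) * W ≤ l.length := by
            have : (k + 1 + 1) * W = (k + 1) * W + W := by ring
            omega
          have := hno (k + 1) hle
          rw [List.drop_drop]
          have heq : W + k * W = (k + 1) * W := by ring
          rw [heq]
          exact this
      have hsplit : l.count false = (l.take W).count false + (l.drop W).count false := by
        conv_lhs => rw [← List.take_append_drop W l]
        rw [List.count_append]
      have hdlen : (l.drop W).length = l.length - W := by simp
      rw [hdlen] at htail
      have hdiv : l.length / W ≤ (l.length - W) / W + 1 := by
        have h2 : l.length ≤ (l.length - W) + W := by omega
        calc l.length / W ≤ ((l.length - W) + W) / W := Nat.div_le_div_right h2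
          _ = (l.length - W) / W + 1 := Nat.add_div_right _ hW
      omega
    · have : l.length / W = 0 := Nat.div_eq_of_lt (by omega)
      omega

/-- If `W ≥ 1` and no complete aligned block of `l` is fully marked, then the
number of unmarked (`false`) entries is at least `l.length / W`. -/
theorem stack_count_false_ge_of_no_fully_marked_block
    (W : ℕ) (hW : 1 ≤ W) (l : List Bool)
    (hno : ∀ k, (k + 1) * W ≤ l.length →
      ¬ (∀ b ∈ (l.drop (k * W)).take W, b = true)) :
    l.length / W ≤ l.count false := by
  exact stack_aux W hW l.length l le_rfl hno
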